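/- Let λ : ℕ → ℝ with λ(n) > 0 for all n, k : ℕ → ℝ with k(j) > 0, and ν(I) = (I!/|I|!)·λ(|I|)⁻¹·∏_r k(r)^(2·I(r)). Fix y : ℕ → ℂ and define the kernel-section coefficients ε(I) = (∏_{r ∈ supp I} conj(y(r))^(I(r)))/ν(I). Then ε is an eigenvector of each annihilation operator: for every j : ℕ and every multi-index I, k(j)·(I(j)+1)·(λ(|I|)/((|I|+1)·λ(|I|+1)))·ε(I + e_j) = (conj(y(j))/k(j))·ε(I). -/

import Mathlib

open scoped BigOperators

/-- The degree `|I| = ∑_r I r` of a multi-index. -/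
noncomputable def mdeg (I : ℕ →₀ ℕ) : ℕ := I.sum fun _ n => n

/-- The factorial `I! = ∏_r (I r)!` of a multi-index. -/
noncomputable def mfact (I : ℕ →₀ ℕ) : ℕ := I.prod fun _ n => n.factorial

/-- The weight `ν(I) = (I!/|I|!)·λ(|I|)⁻¹·∏_r k(r)^(2·I(r))`. -/
noncomputable def nuwt (lam : ℕ → ℝ) (k : ℕ → ℝ) (I : ℕ →₀ ℕ) : ℝ :=
  ((mfact I : ℝ) / (Nat.factorial (mdeg I) : ℝ)) * (lam (mdeg I))⁻¹ *
    ∏ r ∈ I.support, k r ^ (2 * I r)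

/-- Kernel-section coefficients `ε(I) = (∏_{r ∈ supp I} conj(y r)^(I r))/ν(I)`. -/
noncomputable def kerCoeff (lam : ℕ → ℝ) (k : ℕ → ℝ) (y : ℕ → ℂ) (I : ℕ →₀ ℕ) : ℂ :=
  (∏ r ∈ I.support, (starRingEnd ℂ) (y r) ^ I r) / (nuwt lam k I : ℂ)

/-! Raising `I` to `I + e_j` multiplies the numerator of `ε` by `conj(y j)` and the weight by
`ν(I + e_j) / ν(I) = k(j)² · (I(j) + 1)/(|I| + 1) · λ(|I|)/λ(|I| + 1)`. This ratio is exactly `k(j)`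
times the scalar in `A_j`, which leaves the eigenvalue `conj(y j) / k(j)`. -/

open Finsupp

lemma Finsupp.prod_support_pow_add_single {ι M : Type*} [CommMonoid M]
    (f : ι → M) (I : ι →₀ ℕ) (j : ι) :
    ∏ r ∈ (I + single j 1).support, f r ^ (I + single j 1 : ι →₀ ℕ) r =
      f j * ∏ r ∈ I.support, f r ^ I r := by
  change (I + single j 1).prod (fun r n => f r ^ n) = f j * I.prod (fun r n => f r ^ n)
  rw [prod_add_index' (fun _ => pow_zero _) (fun _ _ _ => pow_add _ _ _), mul_comm]
  simp

lemma mdeg_add_single (I : ℕ →₀ ℕ) (j : ℕ) : mdeg (I + single j 1) = mdeg I + 1 := by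
  rw [mdeg, sum_add_index' (fun _ => rfl) (fun _ _ _ => rfl), sum_single_index rfl]
  rfl

lemma mfact_add_single (I : ℕ →₀ ℕ) (j : ℕ) :
    mfact (I + single j 1) = (I j + 1) * mfact I := by
  unfold mfact
  rw [← mul_prod_erase' (I + single j 1) j _ (fun _ => rfl),
    ← mul_prod_erase' I j _ (fun _ => rfl), erase_add, erase_single, add_zero, Finsupp.add_apply,
    single_eq_same, Nat.factorial_succ, mul_assoc]

lemma nuwt_add_single {lam : ℕ → ℝ} (k : ℕ → ℝ) {I : ℕ →₀ ℕ} (j : ℕ)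
    (hlam : lam (mdeg I) ≠ 0) :
    nuwt lam k (I + single j 1) =
      k j ^ 2 * ((I j + 1) / (mdeg I + 1)) * (lam (mdeg I) / lam (mdeg I + 1)) *
        nuwt lam k I := by
  simp only [nuwt, pow_mul]
  rw [mdeg_add_single, mfact_add_single, prod_support_pow_add_single (fun r => k r ^ 2)]
  push_cast [Nat.factorial_succ]
  field_simp

lemma kerCoeff_add_single {lam : ℕ → ℝ} (k : ℕ → ℝ) (y : ℕ → ℂ) {I : ℕ →₀ ℕ} (j : ℕ)
    (hlam : lam (mdeg I) ≠ 0) :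
    kerCoeff lam k y (I + single j 1) =
      (starRingEnd ℂ) (y j) /
          (k j ^ 2 * ((I j + 1) / (mdeg I + 1)) * (lam (mdeg I) / lam (mdeg I + 1)) : ℝ) *
        kerCoeff lam k y I := by
  rw [kerCoeff, kerCoeff, nuwt_add_single k j hlam, prod_support_pow_add_single,
    Complex.ofReal_mul, mul_div_mul_comm]

theorem stmt12 (lam : ℕ → ℝ) (hlam_pos : ∀ n, 0 < lam n)
    (k : ℕ → ℝ) (hk : ∀ r, 0 < k r) (y : ℕ → ℂ) (j : ℕ) (I : ℕ →₀ ℕ) :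
    (k j : ℂ) * ((I j : ℂ) + 1) *
        ((lam (mdeg I) : ℂ) / (((mdeg I : ℂ) + 1) * (lam (mdeg I + 1) : ℂ))) *
        kerCoeff lam k y (I + Finsupp.single j 1) =
      ((starRingEnd ℂ) (y j) / (k j : ℂ)) * kerCoeff lam k y I := by
  have hkj : (k j : ℂ) ≠ 0 := Complex.ofReal_ne_zero.mpr (hk j).ne'
  have hlam : ∀ n, (lam n : ℂ) ≠ 0 := fun n => Complex.ofReal_ne_zero.mpr (hlam_pos n).ne'
  rw [kerCoeff_add_single k y j (hlam_pos _).ne']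
  push_cast
  field_simp [hlam]
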